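/- Let g be a Lie conformal algebra and M a left g-module. Then E := g ⊕ M with the operation (x+u) ∘_λ (y+v) := [x_λ y] + x▷_λ v is a left Leibniz conformal algebra (the hemisemidirect product g ⋉_H M). -/

import Mathlib

/-!
Core framework for λ-bracket (conformal) algebra over ℂ[∂].

`CD = ℂ[∂]`.  For a `ℂ[∂]`-module `M`, `PM1 M = M[λ]` is the polynomial module in one
variable λ; it is a module over `A1 = ℂ[∂][λ]` (where `Polynomial.X : A1` is λ and
`Polynomial.C dd : A1` is ∂ acting on coefficients).  Iterating gives `PM2 M = M[λ₁,λ₂]`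
(a module over `A2 = ℂ[∂][λ₁][λ₂]`, where `vl = λ₁` is the inner variable and `vm = λ₂`
the outer one) and `PM3 M = M[λ₁,λ₂,λ₃]` (over `A3`, variables `u1, u2, u3`).

`lift1 w F p` evaluates a one-variable polynomial `p = Σ aₙ λⁿ` as `Σ wⁿ • F aₙ`:
this is how expressions like `[x_λ [y_μ z]]`, substitutions `λ ↦ -∂-λ`, `λ ↦ λ+μ`, etc.
are expressed.  Similarly `lift2`, `lift3`.
-/

set_option maxSynthPendingDepth 5

noncomputable section
open Polynomial

abbrev CD : Type := Polynomial ℂ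
abbrev A1 : Type := Polynomial CD
abbrev A2 : Type := Polynomial A1
abbrev A3 : Type := Polynomial A2

/-- The operator ∂, i.e. the variable of `ℂ[∂]`. -/
def dd : CD := Polynomial.X

abbrev PM1 (M : Type) [AddCommGroup M] [Module CD M] : Type := PolynomialModule CD M
abbrev PM2 (M : Type) [AddCommGroup M] [Module CD M] : Type := PolynomialModule A1 (PM1 M)
abbrev PM3 (M : Type) [AddCommGroup M] [Module CD M] : Type := PolynomialModule A2 (PM2 M)

namespace CLC

variable {M S : Type} [AddCommGroup M] [Module CD M] [AddCommGroup S] [Module CD S]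

/-- `c ∈ ℂ` as an element of `ℂ[∂]`. -/
def cC (c : ℂ) : CD := Polynomial.C c
/-- `c ∈ ℂ` as a scalar for `M[λ]`. -/
def cC1 (c : ℂ) : A1 := Polynomial.C (Polynomial.C c)
/-- `c ∈ ℂ` as a scalar for `M[λ₁,λ₂]`. -/
def cC2 (c : ℂ) : A2 := Polynomial.C (Polynomial.C (Polynomial.C c))

/-- λ₁ as a scalar for `M[λ₁,λ₂]`. -/
def vl : A2 := Polynomial.C Polynomial.X
/-- λ₂ as a scalar for `M[λ₁,λ₂]`. -/
def vm : A2 := Polynomial.X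
/-- ∂ as a scalar for `M[λ₁,λ₂]`. -/
def vd : A2 := Polynomial.C (Polynomial.C dd)

/-- λ₁ as a scalar for `M[λ₁,λ₂,λ₃]`. -/
def u1 : A3 := Polynomial.C (Polynomial.C Polynomial.X)
/-- λ₂ as a scalar for `M[λ₁,λ₂,λ₃]`. -/
def u2 : A3 := Polynomial.C Polynomial.X
/-- λ₃ as a scalar for `M[λ₁,λ₂,λ₃]`. -/
def u3 : A3 := Polynomial.X
/-- ∂ as a scalar for `M[λ₁,λ₂,λ₃]`. -/
def ud : A3 := Polynomial.C (Polynomial.C (Polynomial.C dd))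

/-- `m`, as a constant polynomial in `M[λ]`. -/
def base1 (a : M) : PM1 M := PolynomialModule.single CD 0 a
/-- `m`, as a constant polynomial in `M[λ₁,λ₂]`. -/
def base2 (a : M) : PM2 M := PolynomialModule.single A1 0 (base1 a)
/-- `m`, as a constant polynomial in `M[λ₁,λ₂,λ₃]`. -/
def base3 (a : M) : PM3 M := PolynomialModule.single A2 0 (base2 a)

/-- Evaluation of a one-variable polynomial `Σ aₙ λⁿ` as `Σ wⁿ • F aₙ`. -/
def lift1 {B T : Type} [CommRing B] [AddCommGroup T] [Module B T]
    (w : B) (F : S → T) (p : PM1 S) : T :=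
  p.coeff.sum fun n a => w ^ n • F a

/-- Evaluation of a two-variable polynomial, with `w1` substituted for the inner
variable and `w2` for the outer one. -/
def lift2 {B T : Type} [CommRing B] [AddCommGroup T] [Module B T]
    (w1 w2 : B) (F : S → T) (q : PM2 S) : T :=
  q.coeff.sum fun n r => w2 ^ n • lift1 w1 F r

/-- Evaluation of a three-variable polynomial. -/
def lift3 {B T : Type} [CommRing B] [AddCommGroup T] [Module B T]
    (w1 w2 w3 : B) (F : S → T) (q : PM3 S) : T :=
  q.coeff.sum fun n r => w3 ^ n • lift2 w1 w2 F r

/-- The substitution `λ ↦ -∂-λ` on `M[λ]`. -/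
def negShift : PM1 M → PM1 M :=
  lift1 (-(Polynomial.C dd) - Polynomial.X : A1) base1

/-- A `ℂ[∂]`-linear map applied coefficientwise on `M[λ]`. -/
def map1 (f : S →ₗ[CD] M) : PM1 S → PM1 M :=
  lift1 (Polynomial.X : A1) (fun a => base1 (f a))

/-- A `ℂ[∂]`-linear map applied coefficientwise on `M[λ₁,λ₂]`. -/
def map2 (f : S →ₗ[CD] M) : PM2 S → PM2 M :=
  lift2 vl vm (fun a => base2 (f a))

/-- A `ℂ[∂]`-linear map applied coefficientwise on `M[λ₁,λ₂,λ₃]`. -/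
def map3 (f : S →ₗ[CD] M) : PM3 S → PM3 M :=
  lift3 u1 u2 u3 (fun a => base3 (f a))


variable {R M : Type} [AddCommGroup R] [Module CD R] [AddCommGroup M] [Module CD M]

/-- A conformal algebra structure: a ℂ-bilinear λ-product `R × R → R[λ]`
satisfying conformal sesquilinearity. -/
structure ConfBracket (R : Type) [AddCommGroup R] [Module CD R] where
  br : R → R → PM1 R
  add_left : ∀ x y z, br (x + y) z = br x z + br y z
  add_right : ∀ x y z, br x (y + z) = br x y + br x z
  smulC_left : ∀ (c : ℂ) (x y : R), br (cC c • x) y = cC1 c • br x y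
  smulC_right : ∀ (c : ℂ) (x y : R), br x (cC c • y) = cC1 c • br x y
  sesq_left : ∀ x y, br (dd • x) y = -((Polynomial.X : A1) • br x y)
  sesq_right : ∀ x y, br x (dd • y) = (Polynomial.C dd + Polynomial.X : A1) • br x y

/-- `x ∘_{λ₁} (y ∘_{λ₂} z)` as an element of `R[λ₁,λ₂]`. -/
def jT1 (br : R → R → PM1 R) (x y z : R) : PM2 R :=
  lift1 vm (fun a => lift1 vl base2 (br x a)) (br y z)

/-- `(x ∘_{λ₁} y) ∘_{λ₁+λ₂} z` as an element of `R[λ₁,λ₂]`. -/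
def jT2 (br : R → R → PM1 R) (x y z : R) : PM2 R :=
  lift1 vl (fun a => lift1 (vl + vm) base2 (br a z)) (br x y)

/-- `y ∘_{λ₂} (x ∘_{λ₁} z)` as an element of `R[λ₁,λ₂]`. -/
def jT3 (br : R → R → PM1 R) (x y z : R) : PM2 R :=
  lift1 vl (fun a => lift1 vm base2 (br y a)) (br x z)

/-- `(x ∘_{λ₁} z) ∘_{-∂-λ₂} y` as an element of `R[λ₁,λ₂]`. -/
def jT4 (br : R → R → PM1 R) (x y z : R) : PM2 R :=
  lift1 vl (fun a => lift1 (-vd - vm) base2 (br a y)) (br x z)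

namespace ConfBracket

variable (B : ConfBracket R)

/-- Skew-symmetry `[x_λ y] = -[y_{-∂-λ} x]`. -/
def Skew : Prop := ∀ x y, B.br x y = - negShift (B.br y x)

/-- The Jacobi identity `[x_λ [y_μ z]] = [[x_λ y]_{λ+μ} z] + [y_μ [x_λ z]]`. -/
def Jacobi : Prop := ∀ x y z, jT1 B.br x y z = jT2 B.br x y z + jT3 B.br x y z

/-- The left Leibniz identity `x∘_λ(y∘_μ z) = (x∘_λ y)∘_{λ+μ} z + y∘_μ(x∘_λ z)`. -/
def LeftLeibniz : Prop := ∀ x y z, jT1 B.br x y z = jT2 B.br x y z + jT3 B.br x y z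

/-- The right Leibniz identity `(x∘_λ y)∘_{λ+μ} z = x∘_λ(y∘_μ z) + (x∘_λ z)∘_{-∂-μ} y`. -/
def RightLeibniz : Prop := ∀ x y z, jT2 B.br x y z = jT1 B.br x y z + jT4 B.br x y z

/-- A Lie conformal algebra: skew-symmetric and satisfying the Jacobi identity. -/
def IsLie : Prop := B.Skew ∧ B.Jacobi

end ConfBracket

/-- A conformal left-action datum: a ℂ-bilinear map `R × M → M[λ]` satisfying
conformal sesquilinearity. -/
structure ConfAction (R M : Type) [AddCommGroup R] [Module CD R]
    [AddCommGroup M] [Module CD M] where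
  act : R → M → PM1 M
  add_left : ∀ (x y : R) (v : M), act (x + y) v = act x v + act y v
  add_right : ∀ (x : R) (v w : M), act x (v + w) = act x v + act x w
  smulC_left : ∀ (c : ℂ) (x : R) (v : M), act (cC c • x) v = cC1 c • act x v
  smulC_right : ∀ (c : ℂ) (x : R) (v : M), act x (cC c • v) = cC1 c • act x v
  sesq_left : ∀ (x : R) (v : M), act (dd • x) v = -((Polynomial.X : A1) • act x v)
  sesq_right : ∀ (x : R) (v : M),
    act x (dd • v) = (Polynomial.C dd + Polynomial.X : A1) • act x v

/-- The left-module identity `[x_λ y] ▷_{λ+μ} v = x ▷_λ (y ▷_μ v) - y ▷_μ (x ▷_λ v)`. -/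
def IsLeftModule (B : ConfBracket R) (A : ConfAction R M) : Prop :=
  ∀ (x y : R) (v : M),
    lift1 vl (fun a => lift1 (vl + vm) base2 (A.act a v)) (B.br x y) =
      lift1 vm (fun m => lift1 vl base2 (A.act x m)) (A.act y v)
      - lift1 vl (fun m => lift1 vm base2 (A.act y m)) (A.act x v)

/-- A conformal right-action datum: a ℂ-bilinear map `M × R → M[λ]` satisfying
conformal sesquilinearity. -/
structure ConfRAction (R M : Type) [AddCommGroup R] [Module CD R]
    [AddCommGroup M] [Module CD M] where
  act : M → R → PM1 M
  add_left : ∀ (v w : M) (x : R), act (v + w) x = act v x + act w x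
  add_right : ∀ (v : M) (x y : R), act v (x + y) = act v x + act v y
  smulC_left : ∀ (c : ℂ) (v : M) (x : R), act (cC c • v) x = cC1 c • act v x
  smulC_right : ∀ (c : ℂ) (v : M) (x : R), act v (cC c • x) = cC1 c • act v x
  sesq_left : ∀ (v : M) (x : R), act (dd • v) x = -((Polynomial.X : A1) • act v x)
  sesq_right : ∀ (v : M) (x : R),
    act v (dd • x) = (Polynomial.C dd + Polynomial.X : A1) • act v x

/-- The right-module identity
`v ◁_μ [x_λ y] = (v ◁_μ x) ◁_{λ+μ} y - (v ◁_μ y) ◁_{-∂-λ} x`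
(here λ is the inner variable `vl` and μ the outer variable `vm`). -/
def IsRightModule (B : ConfBracket R) (A : ConfRAction R M) : Prop :=
  ∀ (x y : R) (v : M),
    lift1 vl (fun a => lift1 vm base2 (A.act v a)) (B.br x y) =
      lift1 vm (fun m => lift1 (vl + vm) base2 (A.act m y)) (A.act v x)
      - lift1 vm (fun m => lift1 (-vd - vl) base2 (A.act m x)) (A.act v y)

end CLC

/-!
On `E = g × M` the product `(x, u) ∘_λ (y, v) = ([x_λ y], x ▷_λ v)` only reads the
`g`-component of its left factor, so each iterated product in the left Leibniz identity splits
into a `g`-part given by the bracket of `g` and an `M`-part given by the action. The `g`-part of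
the identity is the Jacobi identity, and the `M`-part is the module axiom rearranged as
`x ▷_λ (y ▷_μ v) = [x_λ y] ▷_{λ+μ} v + y ▷_μ (x ▷_λ v)`.
-/

namespace CLC

section Lift

variable {S M T B : Type} [AddCommGroup S] [Module CD S] [AddCommGroup M] [Module CD M]
  [CommRing B] [AddCommGroup T] [Module B T]

lemma lift1_zero (w : B) (F : S → T) : lift1 w F (0 : PM1 S) = 0 := by
  unfold lift1
  rw [PolynomialModule.coeff_zero]
  exact Finsupp.sum_zero_index

lemma lift1_single (w : B) {F : S → T} (hF : F 0 = 0) (n : ℕ) (a : S) :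
    lift1 w F (PolynomialModule.single CD n a) = w ^ n • F a := by
  unfold lift1
  rw [PolynomialModule.coeff_single]
  exact Finsupp.sum_single_index (by rw [hF, smul_zero])

lemma lift1_add (w : B) {F : S → T} (hF : ∀ a b, F (a + b) = F a + F b) (p q : PM1 S) :
    lift1 w F (p + q) = lift1 w F p + lift1 w F q := by
  have hF0 : F 0 = 0 := (AddMonoidHom.mk' F hF).map_zero
  unfold lift1
  rw [PolynomialModule.coeff_add]
  exact Finsupp.sum_add_index' (fun _ => by rw [hF0, smul_zero])
    (fun _ _ _ => by rw [hF, smul_add])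

lemma lift1_fun_add (w : B) (F G : S → T) (p : PM1 S) :
    lift1 w (fun a => F a + G a) p = lift1 w F p + lift1 w G p := by
  unfold lift1
  simp_rw [smul_add]
  exact Finsupp.sum_add

lemma lift1_fun_zero (w : B) (p : PM1 S) : lift1 w (fun _ : S => (0 : T)) p = 0 := by
  simp [lift1]

lemma lift1_map (f : S →ₗ[CD] M) (w : B) {G : M → T} (hG : ∀ a b, G (a + b) = G a + G b)
    (p : PM1 S) :
    lift1 w G (PolynomialModule.map CD f p) = lift1 w (fun a => G (f a)) p := by
  have hG0 : G 0 = 0 := (AddMonoidHom.mk' G hG).map_zero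
  induction p using PolynomialModule.induction_linear with
  | zero => rw [map_zero, lift1_zero, lift1_zero]
  | add p q hp hq =>
    rw [map_add, lift1_add w hG, lift1_add w (fun a b => by rw [map_add, hG]), hp, hq]
  | single n a =>
    rw [PolynomialModule.map_single, lift1_single w hG0, lift1_single w (by rw [map_zero, hG0])]

lemma base1_add (a b : S) : base1 (a + b) = base1 a + base1 b :=
  PolynomialModule.single_add 0 a b

lemma base2_add (a b : S) : base2 (a + b) = base2 a + base2 b := by
  unfold base2
  rw [base1_add, PolynomialModule.single_add]

end Lift

section Map

variable {S S' M : Type} [AddCommGroup S] [Module CD S] [AddCommGroup S'] [Module CD S']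
  [AddCommGroup M] [Module CD M]

lemma polynomialModule_map_smul (f : S →ₗ[CD] M) (a : A1) (p : PM1 S) :
    PolynomialModule.map CD f (a • p) = a • PolynomialModule.map CD f p := by
  rw [PolynomialModule.map_smul, Algebra.algebraMap_self, Polynomial.map_id]

lemma map1_eq_map (f : S →ₗ[CD] M) (p : PM1 S) : map1 f p = PolynomialModule.map CD f p := by
  have hbase1 : base1 (f 0) = 0 := by
    rw [map_zero]
    exact PolynomialModule.single_zero 0
  induction p using PolynomialModule.induction_linear with
  | zero => rw [map_zero]; exact lift1_zero _ _
  | add p q hp hq =>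
    rw [map_add, ← hp, ← hq]
    exact lift1_add _ (fun a b => by rw [map_add, base1_add]) p q
  | single n a =>
    rw [PolynomialModule.map_single, map1, lift1_single _ hbase1, Polynomial.X_pow_eq_monomial,
      base1, PolynomialModule.monomial_smul_single, one_smul, add_zero]

def map1ₗ (f : S →ₗ[CD] M) : PM1 S →ₗ[A1] PM1 M where
  toFun := PolynomialModule.map CD f
  map_add' := map_add _
  map_smul' := polynomialModule_map_smul f

def map2ₗ (f : S →ₗ[CD] M) : PM2 S →ₗ[A1] PM2 M :=
  PolynomialModule.map A1 (map1ₗ f)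

lemma map2ₗ_smul (f : S →ₗ[CD] M) (a : A2) (q : PM2 S) :
    map2ₗ f (a • q) = a • map2ₗ f q := by
  rw [map2ₗ, PolynomialModule.map_smul, Algebra.algebraMap_self, Polynomial.map_id]

lemma map2ₗ_base2 (f : S →ₗ[CD] M) (a : S) : map2ₗ f (base2 a) = base2 (f a) := by
  rw [map2ₗ, base2, PolynomialModule.map_single]
  exact congrArg (PolynomialModule.single A1 0) (PolynomialModule.map_single CD f 0 a)

lemma map2ₗ_lift1 (f : S →ₗ[CD] M) (w : A2) (F : S' → PM2 S) (p : PM1 S') :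
    map2ₗ f (lift1 w F p) = lift1 w (fun a => map2ₗ f (F a)) p := by
  unfold lift1
  rw [map_finsuppSum]
  exact Finsupp.sum_congr fun _ _ => map2ₗ_smul f _ _

lemma lift1_base2_map (f : S →ₗ[CD] M) (w : A2) (p : PM1 S) :
    lift1 w base2 (PolynomialModule.map CD f p) = map2ₗ f (lift1 w base2 p) := by
  rw [lift1_map f w base2_add, map2ₗ_lift1]
  simp_rw [map2ₗ_base2]

end Map

variable {g M : Type} [AddCommGroup g] [Module CD g] [AddCommGroup M] [Module CD M]

lemma ConfBracket.br_zero_left (B : ConfBracket g) (y : g) : B.br 0 y = 0 :=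
  (AddMonoidHom.mk' (B.br · y) (fun a b => B.add_left a b y)).map_zero

lemma ConfBracket.br_zero_right (B : ConfBracket g) (x : g) : B.br x 0 = 0 :=
  (AddMonoidHom.mk' (B.br x) (B.add_right x)).map_zero

lemma ConfAction.act_zero_left (A : ConfAction g M) (v : M) : A.act 0 v = 0 :=
  (AddMonoidHom.mk' (A.act · v) (fun a b => A.add_left a b v)).map_zero

lemma ConfAction.act_zero_right (A : ConfAction g M) (x : g) : A.act x 0 = 0 :=
  (AddMonoidHom.mk' (A.act x) (A.add_right x)).map_zero

section Hemisemidirect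

variable (B : ConfBracket g) (A : ConfAction g M)

def hemisemidirectBr (p q : g × M) : PM1 (g × M) :=
  map1 (LinearMap.inl CD g M) (B.br p.1 q.1) + map1 (LinearMap.inr CD g M) (A.act p.1 q.2)

lemma hemisemidirectBr_eq (p q : g × M) :
    hemisemidirectBr B A p q = PolynomialModule.map CD (LinearMap.inl CD g M) (B.br p.1 q.1) +
      PolynomialModule.map CD (LinearMap.inr CD g M) (A.act p.1 q.2) := by
  rw [hemisemidirectBr, map1_eq_map, map1_eq_map]

lemma hemisemidirectBr_add_left (p q r : g × M) :
    hemisemidirectBr B A (p + q) r = hemisemidirectBr B A p r + hemisemidirectBr B A q r := by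
  simp only [hemisemidirectBr_eq, Prod.fst_add, B.add_left, A.add_left, map_add]
  abel

lemma hemisemidirectBr_add_right (p q r : g × M) :
    hemisemidirectBr B A p (q + r) = hemisemidirectBr B A p q + hemisemidirectBr B A p r := by
  simp only [hemisemidirectBr_eq, Prod.fst_add, Prod.snd_add, B.add_right, A.add_right, map_add]
  abel

def hemisemidirect : ConfBracket (g × M) where
  br := hemisemidirectBr B A
  add_left := hemisemidirectBr_add_left B A
  add_right := hemisemidirectBr_add_right B A
  smulC_left c p q := by
    simp only [hemisemidirectBr_eq, Prod.smul_fst, B.smulC_left, A.smulC_left,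
      polynomialModule_map_smul, smul_add]
  smulC_right c p q := by
    simp only [hemisemidirectBr_eq, Prod.smul_fst, Prod.smul_snd, B.smulC_right, A.smulC_right,
      polynomialModule_map_smul, smul_add]
  sesq_left p q := by
    simp only [hemisemidirectBr_eq, Prod.smul_fst, B.sesq_left, A.sesq_left, map_neg,
      polynomialModule_map_smul, smul_add, neg_add]
  sesq_right p q := by
    simp only [hemisemidirectBr_eq, Prod.smul_fst, Prod.smul_snd, B.sesq_right, A.sesq_right,
      polynomialModule_map_smul, smul_add]

lemma hemisemidirect_br : (hemisemidirect B A).br = hemisemidirectBr B A := rfl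

lemma lift1_hemisemidirectBr_nested_right (w w' : A2) (x y z : g × M) :
    lift1 w (fun a => lift1 w' base2 (hemisemidirectBr B A x a)) (hemisemidirectBr B A y z) =
      map2ₗ (LinearMap.inl CD g M)
        (lift1 w (fun a => lift1 w' base2 (B.br x.1 a)) (B.br y.1 z.1)) +
      map2ₗ (LinearMap.inr CD g M)
        (lift1 w (fun m => lift1 w' base2 (A.act x.1 m)) (A.act y.1 z.2)) := by
  have hadd : ∀ a b : g × M, lift1 w' base2 (hemisemidirectBr B A x (a + b)) =
      lift1 w' base2 (hemisemidirectBr B A x a) + lift1 w' base2 (hemisemidirectBr B A x b) :=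
    fun a b => by rw [hemisemidirectBr_add_right, lift1_add w' base2_add]
  rw [hemisemidirectBr_eq B A y z, lift1_add w hadd, lift1_map _ w hadd, lift1_map _ w hadd,
    map2ₗ_lift1, map2ₗ_lift1]
  congr 2 <;> funext a <;>
    simp [hemisemidirectBr_eq, B.br_zero_right, A.act_zero_right, lift1_base2_map]

lemma lift1_hemisemidirectBr_nested_left (w w' : A2) (x y z : g × M) :
    lift1 w (fun a => lift1 w' base2 (hemisemidirectBr B A a z)) (hemisemidirectBr B A x y) =
      map2ₗ (LinearMap.inl CD g M)
        (lift1 w (fun a => lift1 w' base2 (B.br a z.1)) (B.br x.1 y.1)) +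
      map2ₗ (LinearMap.inr CD g M)
        (lift1 w (fun a => lift1 w' base2 (A.act a z.2)) (B.br x.1 y.1)) := by
  have hadd : ∀ a b : g × M, lift1 w' base2 (hemisemidirectBr B A (a + b) z) =
      lift1 w' base2 (hemisemidirectBr B A a z) + lift1 w' base2 (hemisemidirectBr B A b z) :=
    fun a b => by rw [hemisemidirectBr_add_left, lift1_add w' base2_add]
  rw [hemisemidirectBr_eq B A x y, lift1_add w hadd, lift1_map _ w hadd, lift1_map _ w hadd,
    map2ₗ_lift1, map2ₗ_lift1]
  have hinr : (fun m : M => lift1 w' base2 (hemisemidirectBr B A (LinearMap.inr CD g M m) z)) =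
      fun _ => 0 := by
    funext m
    simp [hemisemidirectBr_eq, B.br_zero_left, A.act_zero_left, lift1_zero]
  rw [hinr, lift1_fun_zero, add_zero, ← lift1_fun_add]
  congr 1
  funext a
  simp [hemisemidirectBr_eq, lift1_base2_map, lift1_add w' base2_add]

end Hemisemidirect

end CLC

open CLC

theorem hemisemidirect_product_is_leftLeibniz_general
    {g M : Type} [AddCommGroup g] [Module CD g] [AddCommGroup M] [Module CD M]
    (B : ConfBracket g) (hjacobi : B.Jacobi)
    (A : ConfAction g M) (hmod : IsLeftModule B A) :
    ∃ E : ConfBracket (g × M),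
      E.br = (fun p q =>
        map1 (LinearMap.inl CD g M) (B.br p.1 q.1) +
        map1 (LinearMap.inr CD g M) (A.act p.1 q.2)) ∧
      E.LeftLeibniz := by
  refine ⟨hemisemidirect B A, rfl, fun x y z => ?_⟩
  have hJ := hjacobi x.1 y.1 z.1
  have hM := hmod x.1 y.1 z.2
  simp only [jT1, jT2, jT3, hemisemidirect_br] at hJ ⊢
  rw [lift1_hemisemidirectBr_nested_right, lift1_hemisemidirectBr_nested_left,
    lift1_hemisemidirectBr_nested_right, hJ, hM, map_add, map_sub]
  abel

/-- **Statement 12.** Let `g` be a Lie conformal algebra and `M` a left `g`-module.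
Then `E := g ⊕ M` with `(x+u) ∘_λ (y+v) := [x_λ y] + x ▷_λ v` is a left Leibniz
conformal algebra (the hemisemidirect product `g ⋉_H M`). -/
theorem hemisemidirect_product_is_leftLeibniz
    {g M : Type} [AddCommGroup g] [Module CD g] [AddCommGroup M] [Module CD M]
    (B : ConfBracket g) (hskew : B.Skew) (hjacobi : B.Jacobi)
    (A : ConfAction g M) (hmod : IsLeftModule B A) :
    ∃ E : ConfBracket (g × M),
      E.br = (fun p q =>
        map1 (LinearMap.inl CD g M) (B.br p.1 q.1) +
        map1 (LinearMap.inr CD g M) (A.act p.1 q.2)) ∧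
      E.LeftLeibniz :=
  hemisemidirect_product_is_leftLeibniz_general B hjacobi A hmod
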